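/- Let n ≥ 2, let k ≥ 1, and let p₁, …, p_k be integers with every p_i ≥ 2 and p₁ + ⋯ + p_k = n − 1. Partition the index set {1, …, n−1} into consecutive blocks B₁, …, B_k with |B_i| = p_i. For G_i ∈ SO(p_i) (i = 1, …, k), let Λ(G₁,…,G_k) denote the block-diagonal matrix equal to 1 in the (0,0) entry and equal to G_i on block B_i; every such Λ(G₁,…,G_k) lies in O(1,n−1). Let C be a Weyl candidate on ℝⁿ (trace-freeness is not required). If Λ(G₁,…,G_k)·C = C for every choice of G₁ ∈ SO(p₁), …, G_k ∈ SO(p_k), then θ_{e₀}·C = C; equivalently, every component C_{abcd} with an odd number of indices equal to 0 vanishes (C is purely electric with respect to e₀). -/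
import Mathlib


open Matrix

noncomputable section

/-- Index type for `ℝⁿ` split as a timelike direction (index 0) plus `k` consecutive
spatial blocks of sizes `p 0, …, p (k-1)`. -/
abbrev Idx (k : ℕ) (p : Fin k → ℕ) := Unit ⊕ (Σ i : Fin k, Fin (p i))

/-- The Minkowski metric `diag(-1, 1, …, 1)` on the blocked index type. -/
def etaIdx (k : ℕ) (p : Fin k → ℕ) : Matrix (Idx k p) (Idx k p) ℝ :=
  Matrix.diagonal fun a => match a with
    | Sum.inl _ => (-1 : ℝ)
    | Sum.inr _ => 1

/-- The time reflection `θ_{e₀} = diag(-1, 1, …, 1)` (equal to `etaIdx` as a matrix). -/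
def thetaIdx (k : ℕ) (p : Fin k → ℕ) : Matrix (Idx k p) (Idx k p) ℝ :=
  Matrix.diagonal fun a => match a with
    | Sum.inl _ => (-1 : ℝ)
    | Sum.inr _ => 1

/-- The block-diagonal Lorentz matrix `Λ(G₁,…,G_k)`: `1` on the `(0,0)` entry and
`G i` on the `i`-th spatial block. -/
def blockRot (k : ℕ) (p : Fin k → ℕ)
    (G : ∀ i : Fin k, Matrix (Fin (p i)) (Fin (p i)) ℝ) :
    Matrix (Idx k p) (Idx k p) ℝ :=
  fun a b => match a, b with
    | Sum.inl _, Sum.inl _ => 1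
    | Sum.inr ⟨i, x⟩, Sum.inr ⟨j, y⟩ => if h : j = i then G i x (h ▸ y) else 0
    | _, _ => 0

/-- The pullback action of a matrix `Λ` on rank-4 covariant tensors. -/
def pull {ι : Type*} [Fintype ι] (Λ : Matrix ι ι ℝ)
    (C : ι → ι → ι → ι → ℝ) : ι → ι → ι → ι → ℝ :=
  fun a b c d => ∑ a', ∑ b', ∑ c', ∑ d',
    C a' b' c' d' * Λ a' a * Λ b' b * Λ c' c * Λ d' d

def spMat {m : ℕ} (t : Fin m → Fin m) (s : Fin m → ℝ) : Matrix (Fin m) (Fin m) ℝ :=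
  Matrix.of fun a b => if a = t b then s b else 0

lemma spMat_apply {m : ℕ} (t : Fin m → Fin m) (s : Fin m → ℝ) (a b : Fin m) :
    spMat t s a b = if a = t b then s b else 0 := rfl

lemma spMat_orth {m : ℕ} (t : Fin m → Fin m) (s : Fin m → ℝ) (hinj : Function.Injective t)
    (hs : ∀ x, s x = 1 ∨ s x = -1) : (spMat t s)ᵀ * spMat t s = 1 := by
  ext b c
  rw [Matrix.mul_apply]
  simp only [Matrix.transpose_apply, spMat_apply, ite_mul, zero_mul, mul_ite, mul_zero]
  rw [Finset.sum_ite_eq' Finset.univ (t c)]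
  simp only [Finset.mem_univ, if_true]
  by_cases hbc : b = c
  · subst hbc
    rw [if_pos rfl, Matrix.one_apply_eq]
    rcases hs b with h | h <;> rw [h] <;> norm_num
  · rw [if_neg (fun h => hbc (hinj h).symm), Matrix.one_apply_ne hbc]

lemma pull_sp {ι : Type*} [Fintype ι] [DecidableEq ι] (Λ : Matrix ι ι ℝ) (τ : ι → ι) (σ : ι → ℝ)
    (h : ∀ a b, Λ a b = if a = τ b then σ b else 0) (C : ι → ι → ι → ι → ℝ) (a b c d : ι) :
    pull Λ C a b c d = σ a * σ b * σ c * σ d * C (τ a) (τ b) (τ c) (τ d) := by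
  simp only [pull, h, mul_ite, mul_zero, ite_mul, zero_mul, Finset.sum_ite_eq',
    Finset.mem_univ, if_true]
  ring

section Blocks
variable {k : ℕ} {p : Fin k → ℕ}

def extT (i : Fin k) (t : Fin (p i) → Fin (p i)) : Idx k p → Idx k p
  | Sum.inl u => Sum.inl u
  | Sum.inr ⟨j, z⟩ => if h : j = i then Sum.inr ⟨i, t (h ▸ z)⟩ else Sum.inr ⟨j, z⟩

def extS (i : Fin k) (s : Fin (p i) → ℝ) : Idx k p → ℝ
  | Sum.inl _ => 1
  | Sum.inr ⟨j, z⟩ => if h : j = i then s (h ▸ z) else 1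

@[simp] lemma extT_inl (i : Fin k) (t : Fin (p i) → Fin (p i)) (u : Unit) :
    extT i t (Sum.inl u) = Sum.inl u := rfl

@[simp] lemma extT_same (i : Fin k) (t : Fin (p i) → Fin (p i)) (z : Fin (p i)) :
    extT i t (Sum.inr ⟨i, z⟩) = Sum.inr ⟨i, t z⟩ := by
  show (if h : i = i then _ else _) = _
  rw [dif_pos rfl]

lemma extT_ne (i : Fin k) (t : Fin (p i) → Fin (p i)) (j : Fin k) (z : Fin (p j)) (hj : j ≠ i) :
    extT i t (Sum.inr ⟨j, z⟩) = Sum.inr ⟨j, z⟩ := by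
  show (if h : j = i then _ else _) = _
  rw [dif_neg hj]

@[simp] lemma extS_inl (i : Fin k) (s : Fin (p i) → ℝ) (u : Unit) :
    extS i s (Sum.inl u) = 1 := rfl

@[simp] lemma extS_same (i : Fin k) (s : Fin (p i) → ℝ) (z : Fin (p i)) :
    extS i s (Sum.inr ⟨i, z⟩) = s z := by
  show (if h : i = i then _ else _) = _
  rw [dif_pos rfl]

lemma extS_ne (i : Fin k) (s : Fin (p i) → ℝ) (j : Fin k) (z : Fin (p j)) (hj : j ≠ i) :
    extS i s (Sum.inr ⟨j, z⟩) = 1 := by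
  show (if h : j = i then _ else _) = _
  rw [dif_neg hj]

lemma extT_id (i : Fin k) (a : Idx k p) : extT i (fun z => z) a = a := by
  rcases a with u | ⟨j, z⟩
  · rfl
  · by_cases hj : j = i
    · subst hj; rw [extT_same]
    · rw [extT_ne _ _ _ _ hj]

lemma blockRot_col (i : Fin k) (t : Fin (p i) → Fin (p i)) (s : Fin (p i) → ℝ)
    (a b : Idx k p) :
    blockRot k p (Function.update (fun j => (1 : Matrix (Fin (p j)) (Fin (p j)) ℝ)) i (spMat t s)) a b
      = if a = extT i t b then extS i s b else 0 := by
  rcases a with u | ⟨j, z⟩ <;> rcases b with v | ⟨l, w⟩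
  · simp [blockRot, eq_iff_true_of_subsingleton]
  · by_cases hl : l = i
    · subst hl; rw [extT_same]; simp [blockRot]
    · rw [extT_ne _ _ _ _ hl]; simp [blockRot]
  · simp [blockRot]
  · by_cases hl : i = l
    · subst hl
      rw [extT_same, extS_same]
      by_cases hj : i = j
      · subst hj
        show (if h : i = i then _ else _) = _
        rw [dif_pos rfl]
        rw [Function.update_self]
        show (if z = t w then s w else 0) = _
        simp [Sigma.mk.inj_iff]
      · show (if h : i = j then _ else _) = _
        rw [dif_neg hj]
        rw [if_neg]
        intro h
        rw [Sum.inr.injEq, Sigma.mk.inj_iff] at h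
        exact hj h.1.symm
    · rw [extT_ne _ _ _ _ (fun h => hl h.symm), extS_ne _ _ _ _ (fun h => hl h.symm)]
      by_cases hlj : l = j
      · subst hlj
        show (if h : l = l then _ else _) = _
        rw [dif_pos rfl]
        rw [Function.update_of_ne (fun h => hl h.symm)]
        show (if z = w then (1:ℝ) else 0) = _
        simp [Sigma.mk.inj_iff]
      · show (if h : l = j then _ else _) = _
        rw [dif_neg hlj]
        rw [if_neg]
        intro h
        rw [Sum.inr.injEq, Sigma.mk.inj_iff] at h
        exact hlj h.1.symm


lemma masterOne (C : Idx k p → Idx k p → Idx k p → Idx k p → ℝ)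
    (hinv : ∀ G : (∀ i : Fin k, Matrix (Fin (p i)) (Fin (p i)) ℝ),
      (∀ i, (G i)ᵀ * G i = 1) → (∀ i, (G i).det = 1) →
      pull (blockRot k p G) C = C)
    (i : Fin k) (t : Fin (p i) → Fin (p i)) (s : Fin (p i) → ℝ)
    (hinj : Function.Injective t) (hs : ∀ x, s x = 1 ∨ s x = -1)
    (hdet : (spMat t s).det = 1) (a b c d : Idx k p) :
    C a b c d = extS i s a * extS i s b * extS i s c * extS i s d *
      C (extT i t a) (extT i t b) (extT i t c) (extT i t d) := by
  set G := Function.update (fun j => (1 : Matrix (Fin (p j)) (Fin (p j)) ℝ)) i (spMat t s) with hG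
  have horth : ∀ j, (G j)ᵀ * G j = 1 := by
    intro j
    by_cases hj : j = i
    · subst hj; rw [hG, Function.update_self]; exact spMat_orth t s hinj hs
    · rw [hG, Function.update_of_ne hj]; simp
  have hdets : ∀ j, (G j).det = 1 := by
    intro j
    by_cases hj : j = i
    · subst hj; rw [hG, Function.update_self]; exact hdet
    · rw [hG, Function.update_of_ne hj]; simp
  have hpull := hinv G horth hdets
  calc C a b c d = pull (blockRot k p G) C a b c d := by rw [hpull]
    _ = _ := pull_sp _ (extT i t) (extS i s) (blockRot_col i t s) C a b c d

lemma spMat_id_det {m : ℕ} (s : Fin m → ℝ) : (spMat (fun z => z) s).det = ∏ z, s z := by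
  have h : spMat (fun z => z) s = Matrix.diagonal s := by
    ext a b
    rw [spMat_apply, Matrix.diagonal_apply]
    by_cases hab : a = b
    · subst hab; simp
    · simp [hab]
  rw [h, Matrix.det_diagonal]

lemma prod_flip {m : ℕ} (x y : Fin m) (hxy : x ≠ y) :
    (∏ z, (if z = x ∨ z = y then (-1:ℝ) else 1)) = 1 := by
  have h : (fun z => if z = x ∨ z = y then (-1:ℝ) else 1)
      = fun z => (if z = x then (-1:ℝ) else 1) * (if z = y then (-1:ℝ) else 1) := by
    funext z
    by_cases hx : z = x
    · subst hx; simp [hxy]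
    · by_cases hy : z = y <;> simp [hx, hy, Ne.symm hxy]
  calc (∏ z, (if z = x ∨ z = y then (-1:ℝ) else 1))
      = ∏ z, ((if z = x then (-1:ℝ) else 1) * (if z = y then (-1:ℝ) else 1)) := by rw [← h]
    _ = (∏ z, (if z = x then (-1:ℝ) else 1)) * ∏ z, (if z = y then (-1:ℝ) else 1) :=
        Finset.prod_mul_distrib
    _ = 1 := by
        rw [Finset.prod_ite_eq' Finset.univ x (fun _ => (-1:ℝ)),
          Finset.prod_ite_eq' Finset.univ y (fun _ => (-1:ℝ))]
        norm_num

lemma spMat_perm {m : ℕ} (e : Equiv.Perm (Fin m)) (s : Fin m → ℝ) :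
    spMat (⇑e) s = (e⁻¹).permMatrix ℝ * Matrix.diagonal s := by
  ext a b
  rw [Matrix.mul_diagonal, spMat_apply, Equiv.Perm.permMatrix, PEquiv.toMatrix_apply,
    Equiv.toPEquiv_apply]
  by_cases hab : a = e b
  · rw [if_pos hab, if_pos, one_mul]
    rw [Option.mem_def, Option.some_inj]
    rw [hab]; simp
  · rw [if_neg hab, if_neg, zero_mul]
    rw [Option.mem_def, Option.some_inj]
    intro h
    exact hab (by rw [← h]; simp)

lemma spMat_swap_det {m : ℕ} (x y : Fin m) (hxy : x ≠ y) :
    (spMat (⇑(Equiv.swap x y)) (fun w => if w = y then (-1:ℝ) else 1)).det = 1 := by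
  rw [spMat_perm, Matrix.det_mul, Matrix.det_permutation, Matrix.det_diagonal]
  rw [Finset.prod_ite_eq' Finset.univ y (fun _ => (-1:ℝ))]
  simp [Equiv.Perm.sign_swap hxy]


def sflip {m : ℕ} (x y : Fin m) : Fin m → ℝ := fun z => if z = x ∨ z = y then -1 else 1

lemma sflip_pm {m : ℕ} (x y : Fin m) (z : Fin m) : sflip x y z = 1 ∨ sflip x y z = -1 := by
  unfold sflip; split_ifs <;> simp

@[simp] lemma sflip_left {m : ℕ} (x y : Fin m) : sflip x y x = -1 := if_pos (Or.inl rfl)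
@[simp] lemma sflip_right {m : ℕ} (x y : Fin m) : sflip x y y = -1 := if_pos (Or.inr rfl)
lemma sflip_ne {m : ℕ} {x y z : Fin m} (hx : z ≠ x) (hy : z ≠ y) : sflip x y z = 1 := by
  unfold sflip; rw [if_neg]; rintro (h | h) <;> [exact hx h; exact hy h]

lemma extS_pm (i : Fin k) (s : Fin (p i) → ℝ) (hs : ∀ x, s x = 1 ∨ s x = -1) (a : Idx k p) :
    extS i s a = 1 ∨ extS i s a = -1 := by
  rcases a with u | ⟨j, z⟩
  · left; rfl
  · by_cases hj : j = i
    · subst hj; rw [extS_same]; exact hs z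
    · rw [extS_ne _ _ _ _ hj]; left; rfl

lemma flipEq (C : Idx k p → Idx k p → Idx k p → Idx k p → ℝ)
    (hinv : ∀ G : (∀ i : Fin k, Matrix (Fin (p i)) (Fin (p i)) ℝ),
      (∀ i, (G i)ᵀ * G i = 1) → (∀ i, (G i).det = 1) →
      pull (blockRot k p G) C = C)
    (i : Fin k) (x y : Fin (p i)) (hxy : x ≠ y) (a b c d : Idx k p) :
    C a b c d = extS i (sflip x y) a * extS i (sflip x y) b * extS i (sflip x y) c *
      extS i (sflip x y) d * C a b c d := by
  have h := masterOne C hinv i (fun z => z) (sflip x y) (fun _ _ h => h)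
    (sflip_pm x y) (by rw [spMat_id_det]; exact prod_flip x y hxy) a b c d
  rw [extT_id, extT_id, extT_id, extT_id] at h
  exact h

def sgq {m : ℕ} (y : Fin m) : Fin m → ℝ := fun w => if w = y then -1 else 1

lemma sgq_pm {m : ℕ} (y z : Fin m) : sgq y z = 1 ∨ sgq y z = -1 := by
  unfold sgq; split_ifs <;> simp

@[simp] lemma sgq_self {m : ℕ} (y : Fin m) : sgq y y = -1 := if_pos rfl
lemma sgq_ne {m : ℕ} {y z : Fin m} (h : z ≠ y) : sgq y z = 1 := if_neg h

lemma qrotEq (C : Idx k p → Idx k p → Idx k p → Idx k p → ℝ)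
    (hinv : ∀ G : (∀ i : Fin k, Matrix (Fin (p i)) (Fin (p i)) ℝ),
      (∀ i, (G i)ᵀ * G i = 1) → (∀ i, (G i).det = 1) →
      pull (blockRot k p G) C = C)
    (i : Fin k) (x y : Fin (p i)) (hxy : x ≠ y) (a b c d : Idx k p) :
    C a b c d = extS i (sgq y) a * extS i (sgq y) b * extS i (sgq y) c * extS i (sgq y) d *
      C (extT i (⇑(Equiv.swap x y)) a) (extT i (⇑(Equiv.swap x y)) b)
        (extT i (⇑(Equiv.swap x y)) c) (extT i (⇑(Equiv.swap x y)) d) :=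
  masterOne C hinv i (⇑(Equiv.swap x y)) (sgq y) (Equiv.injective _)
    (sgq_pm y) (spMat_swap_det x y hxy) a b c d

lemma keyZero (C : Idx k p → Idx k p → Idx k p → Idx k p → ℝ)
    (hp : ∀ i, 2 ≤ p i)
    (hanti2 : ∀ a b c d, C a b d c = -C a b c d)
    (hbianchi : ∀ a b c d, C a b c d + C a c d b + C a d b c = 0)
    (hinv : ∀ G : (∀ i : Fin k, Matrix (Fin (p i)) (Fin (p i)) ℝ),
      (∀ i, (G i)ᵀ * G i = 1) → (∀ i, (G i).det = 1) →
      pull (blockRot k p G) C = C)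
    (b c d : Σ i : Fin k, Fin (p i)) :
    C (Sum.inl ()) (Sum.inr b) (Sum.inr c) (Sum.inr d) = 0 := by
  have partner : ∀ (i : Fin k) (x : Fin (p i)), ∃ w : Fin (p i), w ≠ x := by
    intro i x
    haveI : Nontrivial (Fin (p i)) := Fin.nontrivial_iff_two_le.mpr (hp i)
    exact exists_ne x
  obtain ⟨i1, x1⟩ := b
  obtain ⟨i2, x2⟩ := c
  obtain ⟨i3, x3⟩ := d
  by_cases hcd : (⟨i2, x2⟩ : Σ i : Fin k, Fin (p i)) = ⟨i3, x3⟩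
  · -- c = d : antisymmetry
    obtain ⟨rfl, h2⟩ := Sigma.mk.inj_iff.mp hcd
    rw [eq_of_heq h2]
    have h := hanti2 (Sum.inl ()) (Sum.inr ⟨i1, x1⟩) (Sum.inr ⟨i2, x3⟩) (Sum.inr ⟨i2, x3⟩)
    linarith
  by_cases hbc : (⟨i1, x1⟩ : Σ i : Fin k, Fin (p i)) = ⟨i2, x2⟩
  · -- b = c : flip d with a partner
    obtain ⟨rfl, h2⟩ := Sigma.mk.inj_iff.mp hbc
    rw [eq_of_heq h2] at *
    obtain ⟨w, hw⟩ := partner i3 x3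
    have h := flipEq C hinv i3 x3 w (Ne.symm hw) (Sum.inl ())
      (Sum.inr ⟨i1, x2⟩) (Sum.inr ⟨i1, x2⟩) (Sum.inr ⟨i3, x3⟩)
    rw [extS_inl, extS_same, sflip_left] at h
    rcases extS_pm i3 (sflip x3 w) (sflip_pm x3 w) (Sum.inr ⟨i1, x2⟩) with he | he <;>
      rw [he] at h <;> linarith
  by_cases hbd : (⟨i1, x1⟩ : Σ i : Fin k, Fin (p i)) = ⟨i3, x3⟩
  · -- b = d : flip c with a partner
    obtain ⟨rfl, h2⟩ := Sigma.mk.inj_iff.mp hbd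
    rw [eq_of_heq h2] at *
    obtain ⟨w, hw⟩ := partner i2 x2
    have h := flipEq C hinv i2 x2 w (Ne.symm hw) (Sum.inl ())
      (Sum.inr ⟨i1, x3⟩) (Sum.inr ⟨i2, x2⟩) (Sum.inr ⟨i1, x3⟩)
    rw [extS_inl, extS_same, sflip_left] at h
    rcases extS_pm i2 (sflip x2 w) (sflip_pm x2 w) (Sum.inr ⟨i1, x3⟩) with he | he <;>
      rw [he] at h <;> linarith
  -- now b, c, d pairwise distinct
  by_cases h1 : i1 = i2
  · subst h1
    by_cases h2 : i1 = i3
    · subst h2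
      -- all in the same block; coordinates pairwise distinct; quarter rotations
      have h12 : x1 ≠ x2 := fun h => hbc (by rw [h])
      have h13 : x1 ≠ x3 := fun h => hbd (by rw [h])
      have h23 : x2 ≠ x3 := fun h => hcd (by rw [h])
      have e1 := qrotEq C hinv i1 x1 x2 h12 (Sum.inl ())
        (Sum.inr ⟨i1, x1⟩) (Sum.inr ⟨i1, x2⟩) (Sum.inr ⟨i1, x3⟩)
      rw [extS_inl, extS_same, extS_same, extS_same, extT_inl, extT_same, extT_same, extT_same,
        Equiv.swap_apply_left, Equiv.swap_apply_right,
        Equiv.swap_apply_of_ne_of_ne h13.symm h23.symm,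
        sgq_ne h12, sgq_self, sgq_ne h23.symm] at e1
      have e1' := hanti2 (Sum.inl ()) (Sum.inr ⟨i1, x2⟩) (Sum.inr ⟨i1, x3⟩) (Sum.inr ⟨i1, x1⟩)
      have e2 := qrotEq C hinv i1 x1 x3 h13 (Sum.inl ())
        (Sum.inr ⟨i1, x1⟩) (Sum.inr ⟨i1, x2⟩) (Sum.inr ⟨i1, x3⟩)
      rw [extS_inl, extS_same, extS_same, extS_same, extT_inl, extT_same, extT_same, extT_same,
        Equiv.swap_apply_left, Equiv.swap_apply_right,
        Equiv.swap_apply_of_ne_of_ne h12.symm h23,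
        sgq_ne h13, sgq_self, sgq_ne h23] at e2
      have e2' := hanti2 (Sum.inl ()) (Sum.inr ⟨i1, x3⟩) (Sum.inr ⟨i1, x1⟩) (Sum.inr ⟨i1, x2⟩)
      have hb := hbianchi (Sum.inl ()) (Sum.inr ⟨i1, x1⟩) (Sum.inr ⟨i1, x2⟩) (Sum.inr ⟨i1, x3⟩)
      linarith
    · -- c in b's block, d elsewhere : flip d
      obtain ⟨w, hw⟩ := partner i3 x3
      have h := flipEq C hinv i3 x3 w (Ne.symm hw) (Sum.inl ())
        (Sum.inr ⟨i1, x1⟩) (Sum.inr ⟨i1, x2⟩) (Sum.inr ⟨i3, x3⟩)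
      rw [extS_inl, extS_same, sflip_left,
        extS_ne _ _ _ _ h2, extS_ne _ _ _ _ h2] at h
      linarith
  · by_cases h2 : i1 = i3
    · subst h2
      -- d in b's block, c elsewhere : flip c
      obtain ⟨w, hw⟩ := partner i2 x2
      have h := flipEq C hinv i2 x2 w (Ne.symm hw) (Sum.inl ())
        (Sum.inr ⟨i1, x1⟩) (Sum.inr ⟨i2, x2⟩) (Sum.inr ⟨i1, x3⟩)
      rw [extS_inl, extS_same, sflip_left,
        extS_ne _ _ _ _ h1, extS_ne _ _ _ _ h1] at h
      linarith
    · -- c and d both outside b's block : flip b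
      obtain ⟨w, hw⟩ := partner i1 x1
      have h := flipEq C hinv i1 x1 w (Ne.symm hw) (Sum.inl ())
        (Sum.inr ⟨i1, x1⟩) (Sum.inr ⟨i2, x2⟩) (Sum.inr ⟨i3, x3⟩)
      rw [extS_inl, extS_same, sflip_left,
        extS_ne _ _ _ _ (fun h => h1 h.symm), extS_ne _ _ _ _ (fun h => h2 h.symm)] at h
      linarith


def tsign : Idx k p → ℝ := fun a => match a with
  | Sum.inl _ => -1
  | Sum.inr _ => 1

@[simp] lemma tsign_inl (u : Unit) : tsign (k := k) (p := p) (Sum.inl u) = -1 := rfl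
@[simp] lemma tsign_inr (s : Σ i : Fin k, Fin (p i)) :
    tsign (k := k) (p := p) (Sum.inr s) = 1 := rfl

end Blocks


/-- A Weyl candidate invariant under `SO(p₁) × ⋯ × SO(p_k)` (acting block-diagonally
on the spatial indices, with every `p i ≥ 2` and `p₁ + ⋯ + p_k = n - 1`) is invariant
under the time reflection `θ_{e₀}`, i.e. purely electric with respect to `e₀`. -/
theorem stmt12 (n k : ℕ) (hn : 2 ≤ n) (hk : 1 ≤ k) (p : Fin k → ℕ)
    (hp : ∀ i, 2 ≤ p i) (hsum : 1 + ∑ i, p i = n)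
    (C : Idx k p → Idx k p → Idx k p → Idx k p → ℝ)
    (hanti1 : ∀ a b c d, C b a c d = -C a b c d)
    (hanti2 : ∀ a b c d, C a b d c = -C a b c d)
    (hpair : ∀ a b c d, C c d a b = C a b c d)
    (hbianchi : ∀ a b c d, C a b c d + C a c d b + C a d b c = 0)
    (hinv : ∀ G : (∀ i : Fin k, Matrix (Fin (p i)) (Fin (p i)) ℝ),
      (∀ i, (G i)ᵀ * G i = 1) → (∀ i, (G i).det = 1) →
      pull (blockRot k p G) C = C) :
    pull (thetaIdx k p) C = C := by
  have hθ : ∀ a b : Idx k p, thetaIdx k p a b = if a = id b then tsign b else 0 := by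
    intro a b
    rw [thetaIdx, Matrix.diagonal_apply]
    simp only [id_eq]
    by_cases hab : a = b
    · subst hab; rw [if_pos rfl, if_pos rfl]; rcases a with u | s <;> rfl
    · rw [if_neg hab, if_neg hab]
  -- vanishing lemmas
  have key : ∀ b c d : Σ i : Fin k, Fin (p i),
      C (Sum.inl ()) (Sum.inr b) (Sum.inr c) (Sum.inr d) = 0 :=
    keyZero C hp hanti2 hbianchi hinv
  have k1 : ∀ (u : Unit) (b c d : Σ i : Fin k, Fin (p i)),
      C (Sum.inl u) (Sum.inr b) (Sum.inr c) (Sum.inr d) = 0 := by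
    intro u b c d; cases u; exact key b c d
  have k2 : ∀ (u : Unit) (b c d : Σ i : Fin k, Fin (p i)),
      C (Sum.inr b) (Sum.inl u) (Sum.inr c) (Sum.inr d) = 0 := by
    intro u b c d
    have h := hanti1 (Sum.inl u) (Sum.inr b) (Sum.inr c) (Sum.inr d)
    rw [k1 u b c d] at h; linarith
  have k3 : ∀ (u : Unit) (b c d : Σ i : Fin k, Fin (p i)),
      C (Sum.inr b) (Sum.inr c) (Sum.inl u) (Sum.inr d) = 0 := by
    intro u b c d
    have h := hpair (Sum.inl u) (Sum.inr d) (Sum.inr b) (Sum.inr c)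
    rw [k1 u d b c] at h; linarith
  have k4 : ∀ (u : Unit) (b c d : Σ i : Fin k, Fin (p i)),
      C (Sum.inr b) (Sum.inr c) (Sum.inr d) (Sum.inl u) = 0 := by
    intro u b c d
    have h := hanti2 (Sum.inr b) (Sum.inr c) (Sum.inl u) (Sum.inr d)
    rw [k3 u b c d] at h; linarith
  have zz1 : ∀ (u v : Unit) (c d : Idx k p), C (Sum.inl u) (Sum.inl v) c d = 0 := by
    intro u v c d; cases u; cases v
    have h := hanti1 (Sum.inl ()) (Sum.inl ()) c d
    linarith
  have zz2 : ∀ (a b : Idx k p) (u v : Unit), C a b (Sum.inl u) (Sum.inl v) = 0 := by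
    intro a b u v; cases u; cases v
    have h := hanti2 a b (Sum.inl ()) (Sum.inl ())
    linarith
  funext a b c d
  rw [pull_sp (thetaIdx k p) id tsign hθ C a b c d]
  simp only [id_eq]
  rcases a with u | s1 <;> rcases b with v | s2 <;> rcases c with w | s3 <;> rcases d with z | s4 <;>
    simp only [tsign_inl, tsign_inr]
  · ring
  · rw [zz1]; ring
  · rw [zz1]; ring
  · rw [zz1]; ring
  · rw [zz2]; ring
  · ring
  · ring
  · rw [k1]; ring
  · rw [zz2]; ring
  · ring
  · ring
  · rw [k2]; ring
  · ring
  · rw [k3]; ring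
  · rw [k4]; ring
  · ring


end
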